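/- Let A be a unital C*-algebra and a ∈ A. Then v(a)³ ≤ (1/4)·‖a*a + aa*‖·‖a‖ + (1/2)·‖a²‖·‖a‖. -/

import Mathlib

open scoped ComplexOrder

/-- A state on a unital `C*`-algebra: a positive linear functional `φ` (equivalently, since the
algebra is complete, `φ (star b * b) ≥ 0` for all `b`) with `φ 1 = 1`. -/
def IsState {A : Type*} [CStarAlgebra A] (φ : A →ₗ[ℂ] ℂ) : Prop :=
  (∀ b : A, 0 ≤ φ (star b * b)) ∧ φ 1 = 1

/-- The numerical radius of an element of a unital `C*`-algebra:
`v(a) = sup { |φ(a)| : φ a state on A }`. -/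
noncomputable def numRadius {A : Type*} [CStarAlgebra A] (a : A) : ℝ :=
  sSup {r : ℝ | ∃ φ : A →ₗ[ℂ] ℂ, IsState φ ∧ r = ‖φ a‖}

/-!
Fix a state `f` and rotate `a` by a unimodular scalar `z` so that `f (z • a) = ‖f a‖`. Since `f` is
star-preserving, `‖f a‖` is then `f h` for the self-adjoint `h = ℜ (z • a)`, and Cauchy–Schwarz for
`f` gives `‖f a‖² ≤ f (h²) ≤ ‖h²‖`. Expanding `4 h² = b² + (b⋆)² + (b⋆b + bb⋆)` with `b = z • a`
bounds `‖h²‖` by `‖a⋆a + aa⋆‖ / 4 + ‖a²‖ / 2`, so `v(a)² ≤` that quantity; multiplying by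
`v(a) ≤ ‖a‖` gives the cube bound.
-/

open scoped ComplexStarModule

section StarAlgebra

variable {A : Type*} [Ring A] [StarRing A] [Algebra ℂ A] [StarModule ℂ A]

lemma realPart_mul_self (b : A) :
    (ℜ b : A) * ℜ b = (4 : ℂ)⁻¹ • (b ^ 2 + star b ^ 2 + (star b * b + b * star b)) := by
  rw [realPart_apply_coe, ← Complex.coe_smul, smul_mul_smul_comm]
  congr 1
  · norm_num
  · noncomm_ring

lemma star_smul_mul_smul_add_smul_mul_star_smul {z : ℂ} (hz : ‖z‖ = 1) (a : A) :
    star (z • a) * (z • a) + (z • a) * star (z • a) = star a * a + a * star a := by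
  have hzz : star z * z = 1 := by
    rw [Complex.star_def, mul_comm, Complex.mul_conj, Complex.normSq_eq_norm_sq, hz]; norm_num
  rw [star_smul, smul_mul_smul_comm, smul_mul_smul_comm, hzz, mul_comm, hzz, one_smul, one_smul]

end StarAlgebra

lemma norm_realPart_mul_self_le {A : Type*} [NormedRing A] [StarRing A] [NormedStarGroup A]
    [NormedAlgebra ℂ A] [StarModule ℂ A] (b : A) :
    ‖(ℜ b : A) * ℜ b‖ ≤ 1 / 4 * ‖star b * b + b * star b‖ + 1 / 2 * ‖b ^ 2‖ := by
  have hstar : ‖star b ^ 2‖ = ‖b ^ 2‖ := by rw [← star_pow, norm_star]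
  have htri := norm_add₃_le (a := b ^ 2) (b := star b ^ 2) (c := star b * b + b * star b)
  rw [realPart_mul_self, norm_smul, norm_inv, Complex.norm_ofNat]
  linarith

namespace PositiveLinearMap

variable {A : Type*} [CStarAlgebra A] [PartialOrder A] [StarOrderedRing A] (f : A →ₚ[ℂ] ℂ)

/-- Cauchy–Schwarz for the GNS semi-inner product `⟪x, y⟫ = f (star x * y)`, at `x = 1`. -/
lemma norm_apply_sq_le (a : A) : ‖f a‖ ^ 2 ≤ (f 1).re * (f (star a * a)).re := by
  have h := inner_mul_inner_self_le (𝕜 := ℂ) (f.toPreGNS 1) (f.toPreGNS a)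
  simp only [preGNS_inner_def, ofPreGNS_toPreGNS, star_one, one_mul, mul_one, map_star,
    Complex.star_def, Complex.norm_conj, RCLike.re_to_complex] at h
  rwa [sq]

variable {f}

lemma norm_apply_sq_le_norm_star_mul_self (hf : f 1 = 1) (a : A) :
    ‖f a‖ ^ 2 ≤ ‖star a * a‖ :=
  calc ‖f a‖ ^ 2 ≤ (f 1).re * (f (star a * a)).re := f.norm_apply_sq_le a
    _ ≤ ‖f (star a * a)‖ := by simpa [hf] using Complex.re_le_norm _
    _ ≤ ‖star a * a‖ := by simpa [hf] using f.norm_apply_le_of_nonneg _ (star_mul_self_nonneg a)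

lemma norm_apply_le_of_map_one (hf : f 1 = 1) (a : A) : ‖f a‖ ≤ ‖a‖ := by
  have h := norm_apply_sq_le_norm_star_mul_self hf a
  rw [CStarRing.norm_star_mul_self, ← sq] at h
  exact (pow_le_pow_iff_left₀ (norm_nonneg _) (norm_nonneg _) two_ne_zero).1 h

lemma re_apply_realPart (b : A) : (f (ℜ b : A)).re = (f b).re := by
  simp [realPart_apply_coe, map_smul_of_tower, map_star, ← mul_add, ← two_mul]

lemma re_apply_sq_le_norm_realPart_mul_self (hf : f 1 = 1) (b : A) :
    (f b).re ^ 2 ≤ ‖(ℜ b : A) * ℜ b‖ :=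
  calc (f b).re ^ 2 = (f (ℜ b : A)).re ^ 2 := by rw [re_apply_realPart]
    _ ≤ ‖f (ℜ b : A)‖ ^ 2 := by
        rw [← sq_abs]; gcongr; exact Complex.abs_re_le_norm _
    _ ≤ ‖star (ℜ b : A) * ℜ b‖ := norm_apply_sq_le_norm_star_mul_self hf _
    _ = ‖(ℜ b : A) * ℜ b‖ := by rw [(ℜ b).2.star_eq]

lemma norm_apply_sq_le_of_map_one (hf : f 1 = 1) (a : A) :
    ‖f a‖ ^ 2 ≤ 1 / 4 * ‖star a * a + a * star a‖ + 1 / 2 * ‖a ^ 2‖ := by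
  obtain ⟨z, hz, hza⟩ := Complex.exists_norm_eq_mul_self (f a)
  have hre : ‖f a‖ = (f (z • a)).re := by
    rw [map_smul, smul_eq_mul, ← hza, Complex.ofReal_re]
  calc ‖f a‖ ^ 2 = (f (z • a)).re ^ 2 := by rw [hre]
    _ ≤ ‖(ℜ (z • a) : A) * ℜ (z • a)‖ := re_apply_sq_le_norm_realPart_mul_self hf _
    _ ≤ 1 / 4 * ‖star (z • a) * (z • a) + (z • a) * star (z • a)‖ + 1 / 2 * ‖(z • a) ^ 2‖ :=
        norm_realPart_mul_self_le _
    _ = 1 / 4 * ‖star a * a + a * star a‖ + 1 / 2 * ‖a ^ 2‖ := by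
        rw [star_smul_mul_smul_add_smul_mul_star_smul hz, smul_pow, norm_smul, norm_pow, hz,
          one_pow, one_mul]

end PositiveLinearMap

section NumRadius

variable {A : Type*} [CStarAlgebra A]

lemma IsState.map_nonneg [PartialOrder A] [StarOrderedRing A] {φ : A →ₗ[ℂ] ℂ} (hφ : IsState φ)
    {x : A} (hx : 0 ≤ x) : 0 ≤ φ x := by
  simpa [(CFC.sqrt_nonneg x).isSelfAdjoint.star_eq, CFC.sqrt_mul_sqrt_self x hx]
    using hφ.1 (CFC.sqrt x)

lemma numRadius_nonneg (a : A) : 0 ≤ numRadius a :=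
  Real.sSup_nonneg (by rintro _ ⟨φ, -, rfl⟩; exact norm_nonneg _)

lemma numRadius_le [PartialOrder A] [StarOrderedRing A] (a : A) {c : ℝ} (hc : 0 ≤ c)
    (h : ∀ f : A →ₚ[ℂ] ℂ, f 1 = 1 → ‖f a‖ ≤ c) : numRadius a ≤ c :=
  Real.sSup_le (by rintro _ ⟨φ, hφ, rfl⟩; exact h (.mk₀ φ fun _ ↦ hφ.map_nonneg) hφ.2) hc

end NumRadius

/-- Corollary 2.13:
`v(a)³ ≤ (1/4)·‖a*a + aa*‖·‖a‖ + (1/2)·‖a²‖·‖a‖`. -/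
theorem numRadius_cube_le_quarter_half
    {A : Type*} [CStarAlgebra A] (a : A) :
    numRadius a ^ 3 ≤
      (1 / 4) * ‖star a * a + a * star a‖ * ‖a‖ + (1 / 2) * ‖a ^ 2‖ * ‖a‖ := by
  let _ := CStarAlgebra.spectralOrder A
  let _ := CStarAlgebra.spectralOrderedRing A
  set D := 1 / 4 * ‖star a * a + a * star a‖ + 1 / 2 * ‖a ^ 2‖
  have hsq : numRadius a ^ 2 ≤ D := by
    exact (Real.le_sqrt (numRadius_nonneg a) (by positivity)).1 <| numRadius_le a (by positivity)
      fun f hf ↦ Real.le_sqrt_of_sq_le (f.norm_apply_sq_le_of_map_one hf a)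
  have hnorm : numRadius a ≤ ‖a‖ :=
    numRadius_le a (norm_nonneg a) fun f hf ↦ f.norm_apply_le_of_map_one hf a
  calc numRadius a ^ 3 = numRadius a ^ 2 * numRadius a := by ring
    _ ≤ D * ‖a‖ := mul_le_mul hsq hnorm (numRadius_nonneg a) (by positivity)
    _ = _ := by ring
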